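/- Let f : ℕ → ℝ be a multiplicative arithmetic function with f(1) = 1. Assume there exist A > 0 and c ∈ (0,1) such that |f(n)| ≤ A c^n for all n ≥ 2. Then for all n ≥ 2, the Dirichlet inverse satisfies |f⁻¹(n)| ≤ n^{3 ln c / ln 3 + ln(1+A)/ln 2}. -/

import Mathlib

/-!
The Dirichlet inverse `g` of a multiplicative `f` is multiplicative: the multiplicative function
agreeing with `g` on prime powers is again a right inverse of `f`, because a convolution evaluated
at `p ^ k` only involves values at powers of `p`. So it suffices to bound `g (p ^ k)`.

Put `β = 3 log c / log 3 + log (1 + A) / log 2` and `B = p ^ β`. For `j ≥ 1` we have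
`|f (p ^ j)| ≤ A c ^ (p ^ j) ≤ A (c ^ p) ^ j`, and `c ^ p (1 + A) ≤ B`: raise `p ^ 3 ≤ 3 ^ p` to the
power `log₃ c ≤ 0` and `2 ≤ p` to the power `log₂ (1 + A) ≥ 0`. The recurrence
`g (p ^ k) = -∑_{i<k} f (p ^ (k - i)) g (p ^ i)` then gives `|g (p ^ k)| ≤ B ^ k` by induction.
-/

open Finset Real

theorem Nat.pow_three_le_three_pow (n : ℕ) : n ^ 3 ≤ 3 ^ n := by
  induction n with
  | zero => norm_num
  | succ n ih =>
    rcases Nat.lt_or_ge n 3 with hn | hn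
    · interval_cases n <;> norm_num
    · calc (n + 1) ^ 3 ≤ 3 * n ^ 3 := by nlinarith [Nat.mul_le_mul hn hn]
        _ ≤ 3 * 3 ^ n := by omega
        _ = 3 ^ (n + 1) := by ring

theorem self_le_rpow_logb_two {a x : ℝ} (ha : 1 ≤ a) (hx : 2 ≤ x) : a ≤ x ^ logb 2 a := by
  calc a = 2 ^ logb 2 a := (rpow_logb two_pos (by norm_num) (by linarith)).symm
    _ ≤ x ^ logb 2 a := rpow_le_rpow zero_le_two hx (logb_nonneg one_lt_two ha)

theorem pow_le_rpow_three_mul_logb_three {c : ℝ} (hc0 : 0 < c) (hc1 : c ≤ 1) {n : ℕ}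
    (hn : n ≠ 0) : c ^ n ≤ (n : ℝ) ^ (3 * logb 3 c) := by
  have h3 : (3 : ℝ) ^ logb 3 c = c := rpow_logb (by norm_num) (by norm_num) hc0
  have hcube : ((n : ℝ) ^ 3) ≤ (3 : ℝ) ^ n := by exact_mod_cast Nat.pow_three_le_three_pow n
  calc c ^ n = ((3 : ℝ) ^ n) ^ logb 3 c := by
        rw [← rpow_pow_comm (by norm_num), h3]
    _ ≤ ((n : ℝ) ^ 3) ^ logb 3 c :=
        rpow_le_rpow_of_nonpos (by positivity) hcube (logb_nonpos (by norm_num) hc0.le hc1)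
    _ = (n : ℝ) ^ (3 * logb 3 c) := by
        rw [← rpow_pow_comm (Nat.cast_nonneg n), ← rpow_natCast, ← rpow_mul (Nat.cast_nonneg n),
          mul_comm]
        norm_num

theorem pow_mul_one_add_le_rpow {A c : ℝ} (hA : 0 ≤ A) (hc0 : 0 < c) (hc1 : c ≤ 1) {n : ℕ}
    (hn : 2 ≤ n) :
    c ^ n * (1 + A) ≤ (n : ℝ) ^ (3 * log c / log 3 + log (1 + A) / log 2) := by
  have hn' : (2 : ℝ) ≤ n := by exact_mod_cast hn
  rw [rpow_add (by linarith), mul_div_assoc]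
  exact mul_le_mul (pow_le_rpow_three_mul_logb_three hc0 hc1 (by omega))
    (self_le_rpow_logb_two (by linarith) hn') (by linarith) (by positivity)

section Recurrence

variable {A y B : ℝ}

theorem sum_range_mul_pow_sub_mul_pow_le (hA : 0 ≤ A) (hy : 0 ≤ y) (hB : y * (1 + A) ≤ B)
    (k : ℕ) : ∑ i ∈ range k, A * y ^ (k - i) * B ^ i ≤ B ^ k := by
  have hB0 : 0 ≤ B := le_trans (by positivity) hB
  induction k with
  | zero => simp
  | succ k ih =>
    have hshift : ∑ i ∈ range k, A * y ^ (k + 1 - i) * B ^ i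
        = y * ∑ i ∈ range k, A * y ^ (k - i) * B ^ i := by
      rw [mul_sum]
      refine sum_congr rfl fun i hi => ?_
      rw [Nat.sub_add_comm (mem_range.mp hi).le, pow_succ]
      ring
    calc ∑ i ∈ range (k + 1), A * y ^ (k + 1 - i) * B ^ i
        = y * ∑ i ∈ range k, A * y ^ (k - i) * B ^ i + A * y * B ^ k := by
          rw [sum_range_succ, hshift, Nat.add_sub_cancel_left, pow_one]
      _ ≤ y * B ^ k + A * y * B ^ k := by gcongr
      _ = y * (1 + A) * B ^ k := by ring
      _ ≤ B ^ (k + 1) := by rw [pow_succ']; gcongr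

theorem abs_le_pow_of_abs_le_sum {u : ℕ → ℝ} (hA : 0 ≤ A) (hy : 0 ≤ y)
    (hB : y * (1 + A) ≤ B) (h0 : |u 0| ≤ 1)
    (hrec : ∀ k, |u (k + 1)| ≤ ∑ i ∈ range (k + 1), A * y ^ (k + 1 - i) * |u i|) (k : ℕ) :
    |u k| ≤ B ^ k := by
  induction k using Nat.strong_induction_on with
  | _ k ih =>
    rcases k with _ | k
    · simpa using h0
    calc |u (k + 1)| ≤ ∑ i ∈ range (k + 1), A * y ^ (k + 1 - i) * |u i| := hrec k
      _ ≤ ∑ i ∈ range (k + 1), A * y ^ (k + 1 - i) * B ^ i :=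
          sum_le_sum fun i hi => by gcongr; exact ih i (mem_range.mp hi)
      _ ≤ B ^ (k + 1) := sum_range_mul_pow_sub_mul_pow_le hA hy hB _

end Recurrence

section OfFunction

variable {R : Type*}

theorem toArithmeticFunction_apply_of_ne_zero [Zero R] (f : ℕ → R) {n : ℕ} (hn : n ≠ 0) :
    toArithmeticFunction f n = f n :=
  if_neg hn

theorem isMultiplicative_toArithmeticFunction [MonoidWithZero R] {f : ℕ → R} (hf1 : f 1 = 1)
    (hmult : ∀ m n : ℕ, 0 < m → 0 < n → m.Coprime n → f (m * n) = f m * f n) :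
    (toArithmeticFunction f).IsMultiplicative := by
  refine ArithmeticFunction.IsMultiplicative.iff_ne_zero.mpr
    ⟨by rw [toArithmeticFunction_apply_of_ne_zero f one_ne_zero, hf1], fun {m n} hm hn hmn => ?_⟩
  simp only [toArithmeticFunction_apply_of_ne_zero f, hm, hn, mul_ne_zero hm hn, ne_eq,
    not_false_eq_true]
  exact hmult m n (Nat.pos_of_ne_zero hm) (Nat.pos_of_ne_zero hn) hmn

theorem toArithmeticFunction_mul_eq_one [Semiring R] {f g : ℕ → R}
    (hfg : ∀ n : ℕ, 0 < n → ∑ d ∈ n.divisors, f (n / d) * g d = if n = 1 then 1 else 0) :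
    toArithmeticFunction f * toArithmeticFunction g = 1 := by
  ext n
  rcases eq_or_ne n 0 with rfl | hn
  · simp
  rw [ArithmeticFunction.mul_apply, Nat.sum_divisorsAntidiagonal'
    (fun a b => toArithmeticFunction f a * toArithmeticFunction g b),
    ArithmeticFunction.one_apply, ← hfg n (Nat.pos_of_ne_zero hn)]
  refine sum_congr rfl fun d hd => ?_
  have hd0 : d ≠ 0 := Nat.ne_of_gt (Nat.pos_of_mem_divisors hd)
  have hnd0 : n / d ≠ 0 := (Nat.div_pos (Nat.divisor_le hd) (Nat.pos_of_ne_zero hd0)).ne'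
  rw [toArithmeticFunction_apply_of_ne_zero f hnd0, toArithmeticFunction_apply_of_ne_zero g hd0]

end OfFunction

namespace ArithmeticFunction

variable {R : Type*}

theorem mul_apply_prime_pow [Semiring R] (f g : ArithmeticFunction R) {p : ℕ} (hp : p.Prime)
    (k : ℕ) : (f * g) (p ^ k) = ∑ i ∈ range (k + 1), f (p ^ (k - i)) * g (p ^ i) := by
  rw [mul_apply, Nat.sum_divisorsAntidiagonal' (fun a b => f a * g b),
    Nat.sum_divisors_prime_pow hp]
  refine sum_congr rfl fun i hi => ?_
  rw [Nat.pow_div (Nat.lt_succ_iff.mp (mem_range.mp hi)) hp.pos]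

def multiplicativeExtension [CommMonoidWithZero R] (f : ArithmeticFunction R) :
    ArithmeticFunction R :=
  toArithmeticFunction fun n => n.factorization.prod fun p k => f (p ^ k)

theorem isMultiplicative_multiplicativeExtension [CommMonoidWithZero R]
    (f : ArithmeticFunction R) : f.multiplicativeExtension.IsMultiplicative := by
  refine IsMultiplicative.iff_ne_zero.mpr ⟨by simp [multiplicativeExtension, toArithmeticFunction],
    fun {m n} hm hn hmn => ?_⟩
  rw [multiplicativeExtension, toArithmeticFunction_apply_of_ne_zero _ (mul_ne_zero hm hn),
    toArithmeticFunction_apply_of_ne_zero _ hm, toArithmeticFunction_apply_of_ne_zero _ hn,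
    Nat.factorization_mul hm hn]
  exact Finsupp.prod_add_index_of_disjoint hmn.disjoint_primeFactors _

theorem multiplicativeExtension_apply_prime_pow [CommMonoidWithZero R] {f : ArithmeticFunction R}
    (hf : f 1 = 1) {p : ℕ} (hp : p.Prime) (k : ℕ) :
    f.multiplicativeExtension (p ^ k) = f (p ^ k) := by
  rw [multiplicativeExtension, toArithmeticFunction_apply_of_ne_zero _ (pow_ne_zero k hp.ne_zero),
    hp.factorization_pow]
  exact Finsupp.prod_single_index (by rw [pow_zero, hf])

theorem apply_one_of_mul_eq_one [Semiring R] {f g : ArithmeticFunction R} (hf1 : f 1 = 1)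
    (hfg : f * g = 1) : g 1 = 1 := by
  simpa [hf1] using congr($hfg 1)

theorem IsMultiplicative.of_mul_eq_one [CommSemiring R] {f g : ArithmeticFunction R}
    (hf : f.IsMultiplicative) (hfg : f * g = 1) : g.IsMultiplicative := by
  have hext := isMultiplicative_multiplicativeExtension g
  have hfe : f * g.multiplicativeExtension = 1 := by
    refine (IsMultiplicative.eq_iff_eq_on_prime_powers _ (hf.mul hext) _
      isMultiplicative_one).mpr fun p k hp => ?_
    rw [← hfg, mul_apply_prime_pow _ _ hp, mul_apply_prime_pow _ _ hp]
    simp only [multiplicativeExtension_apply_prime_pow (apply_one_of_mul_eq_one hf.map_one hfg) hp]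
  rwa [left_inv_eq_right_inv ((mul_comm g f).trans hfg) hfe]

theorem apply_prime_pow_succ_of_mul_eq_one [CommRing R] {f g : ArithmeticFunction R}
    (hf1 : f 1 = 1) (hfg : f * g = 1) {p : ℕ} (hp : p.Prime) (k : ℕ) :
    g (p ^ (k + 1)) = -∑ i ∈ range (k + 1), f (p ^ (k + 1 - i)) * g (p ^ i) := by
  have h := congr($hfg (p ^ (k + 1)))
  rw [mul_apply_prime_pow _ _ hp, sum_range_succ, Nat.sub_self, pow_zero, hf1, one_mul,
    one_apply_ne (Nat.one_lt_pow k.succ_ne_zero hp.one_lt).ne'] at h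
  linear_combination h

theorem abs_le_rpow_of_isMultiplicative {g : ArithmeticFunction ℝ} (hg : g.IsMultiplicative)
    {β : ℝ} (hpow : ∀ p k : ℕ, p.Prime → |g (p ^ k)| ≤ ((p ^ k : ℕ) : ℝ) ^ β) {n : ℕ}
    (hn : n ≠ 0) : |g n| ≤ (n : ℝ) ^ β := by
  induction n using Nat.recOnPosPrimePosCoprime with
  | prime_pow p k hp _ => exact hpow p k hp
  | zero => exact absurd rfl hn
  | one => simp [hg.map_one]
  | coprime a b _ _ hab iha ihb =>
    rw [hg.map_mul_of_coprime hab, abs_mul, Nat.cast_mul,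
      mul_rpow (Nat.cast_nonneg a) (Nat.cast_nonneg b)]
    exact mul_le_mul (iha (left_ne_zero_of_mul hn)) (ihb (right_ne_zero_of_mul hn))
      (abs_nonneg _) (by positivity)

theorem abs_apply_prime_pow_le {f g : ArithmeticFunction ℝ} (hf1 : f 1 = 1) (hfg : f * g = 1)
    {A c B : ℝ} (hA : 0 ≤ A) (hc0 : 0 ≤ c) (hc1 : c ≤ 1)
    (hf : ∀ n : ℕ, 2 ≤ n → |f n| ≤ A * c ^ n) {p : ℕ} (hp : p.Prime)
    (hB : c ^ p * (1 + A) ≤ B) (k : ℕ) : |g (p ^ k)| ≤ B ^ k := by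
  have hfpow : ∀ j ≠ 0, |f (p ^ j)| ≤ A * (c ^ p) ^ j := fun j hj =>
    calc |f (p ^ j)| ≤ A * c ^ p ^ j := hf _ (Nat.one_lt_pow hj hp.one_lt)
      _ ≤ A * (c ^ p) ^ j := by
        rw [← pow_mul]
        exact mul_le_mul_of_nonneg_left (pow_le_pow_of_le_one hc0 hc1
          (Nat.mul_le_pow hp.ne_one j)) hA
  refine abs_le_pow_of_abs_le_sum (u := fun k => g (p ^ k)) hA (by positivity) hB
    (by simp [apply_one_of_mul_eq_one hf1 hfg]) (fun k => ?_) k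
  rw [apply_prime_pow_succ_of_mul_eq_one hf1 hfg hp, abs_neg]
  refine (abs_sum_le_sum_abs _ _).trans (sum_le_sum fun i hi => ?_)
  rw [abs_mul]
  exact mul_le_mul_of_nonneg_right (hfpow _ (by have := mem_range.mp hi; omega)) (abs_nonneg _)

end ArithmeticFunction

open ArithmeticFunction in
theorem stmt11 (f g : ℕ → ℝ) (hf1 : f 1 = 1)
    (hmult : ∀ m n : ℕ, 0 < m → 0 < n → Nat.Coprime m n → f (m * n) = f m * f n)
    (hginv : ∀ n : ℕ, 0 < n →
      ∑ d ∈ n.divisors, f (n / d) * g d = if n = 1 then 1 else 0)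
    (A c : ℝ) (hA : 0 < A) (hc0 : 0 < c) (hc1 : c < 1)
    (hf : ∀ n : ℕ, 2 ≤ n → |f n| ≤ A * c ^ n) :
    ∀ n : ℕ, 2 ≤ n →
      |g n| ≤ (n : ℝ) ^ (3 * Real.log c / Real.log 3 +
        Real.log (1 + A) / Real.log 2) := by
  intro n hn
  have hF := isMultiplicative_toArithmeticFunction hf1 hmult
  have hFG := toArithmeticFunction_mul_eq_one hginv
  rw [← toArithmeticFunction_apply_of_ne_zero g (by omega)]
  refine abs_le_rpow_of_isMultiplicative (hF.of_mul_eq_one hFG) (fun p k hp => ?_) (by omega)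
  rw [Nat.cast_pow, ← rpow_pow_comm (Nat.cast_nonneg p)]
  refine abs_apply_prime_pow_le hF.map_one hFG hA.le hc0.le hc1.le (fun m hm => ?_) hp
    (pow_mul_one_add_le_rpow hA.le hc0 hc1.le hp.two_le) k
  rw [toArithmeticFunction_apply_of_ne_zero f (by omega)]
  exact hf m hm
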